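/- Let d ≥ 1 and let V be a nondegenerate k/κ-hermitian space of dimension 2d+1. Let W' ⊆ V be a special subspace of codimension d−1 (so dim W' = d+2). Then the map W ↦ W⊥ is a bijection from the set of special subspaces W ⊆ V of codimension 1 (i.e. dim W = 2d, W⊥ ⊆ W) such that W' ⊄ W and W ∩ W' is a special subspace of V (i.e. (W ∩ W')⊥ ⊆ W ∩ W'), onto the set of isotropic lines L ⊆ V with L ⊆ W' and L ⊄ W'⊥. -/

import Mathlib

open Module

variable {k : Type*} [Field k] {V : Type*} [AddCommGroup V] [Module k V]

/-- The orthogonal complement `U⊥ = {x : (x, u) = 0 for all u ∈ U}` of a subspace with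
respect to a sesquilinear form (linear in the first variable). -/
def perp {σ : k →+* k} (h : V →ₗ[k] V →ₛₗ[σ] k) (U : Submodule k V) : Submodule k V where
  carrier := {x | ∀ u ∈ U, h x u = 0}
  add_mem' := by
    intro x y hx hy u hu
    simp [hx u hu, hy u hu]
  zero_mem' := by
    intro u hu
    simp
  smul_mem' := by
    intro a x hx u hu
    simp [hx u hu]

/-!
For a nondegenerate hermitian form `U ↦ U⊥` is an inclusion-reversing involution
on subspaces with `dim U⊥ = dim V - dim U` and `(U ∩ W)⊥ = U⊥ + W⊥`. Hence it maps the
hyperplanes `W` with `W⊥ ⊆ W` onto the isotropic lines, `W' ⊆ W` corresponds to `W⊥ ⊆ W'⊥`, and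
`(W ∩ W')⊥ = W⊥ + W'⊥` lies in `W ∩ W'` exactly when the line `W⊥` lies in `W'`.
The dimension formula only needs `σ` to be bijective, and a nonzero hermitian form forces
`σ ∘ σ = id`.
-/

lemma Submodule.finrank_map_of_injective_semilinear {R R₂ M M₂ : Type*} [Ring R] [Ring R₂]
    [AddCommGroup M] [Module R M] [AddCommGroup M₂] [Module R₂ M₂]
    {σ : R →+* R₂} {σ' : R₂ →+* R} [RingHomInvPair σ σ'] [RingHomInvPair σ' σ]
    (f : M →ₛₗ[σ] M₂) (hf : Function.Injective f) (U : Submodule R M) :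
    finrank R₂ (U.map f) = finrank R U := by
  have hσ : Function.Bijective σ :=
    ⟨Function.LeftInverse.injective (g := σ') fun _ => RingHomInvPair.comp_apply_eq,
      RingHom.surjective σ⟩
  have e := U.equivMapOfInjective f hf
  simpa only [Cardinal.toNat_lift, finrank] using congrArg Cardinal.toNat
    (lift_rank_eq_of_equiv_equiv σ e.toAddEquiv hσ fun r m => e.map_smulₛₗ r m).symm

section Perp

variable {σ : k →+* k} (h : V →ₗ[k] V →ₛₗ[σ] k)

def IsHermitianForm : Prop := ∀ x y : V, h x y = σ (h y x)

variable {h}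

lemma perp_le_perp {U W : Submodule k V} (hUW : U ≤ W) : perp h W ≤ perp h U :=
  fun _ hx u hu => hx u (hUW hu)

lemma perp_sup (U W : Submodule k V) : perp h (U ⊔ W) = perp h U ⊓ perp h W := by
  refine le_antisymm (le_inf (perp_le_perp le_sup_left) (perp_le_perp le_sup_right)) ?_
  rintro x ⟨hxU, hxW⟩ v hv
  obtain ⟨u, hu, w, hw, rfl⟩ := Submodule.mem_sup.mp hv
  rw [map_add, hxU u hu, hxW w hw, add_zero]

lemma IsHermitianForm.le_perp_comm (hherm : IsHermitianForm h) {U W : Submodule k V} :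
    U ≤ perp h W ↔ W ≤ perp h U := by
  suffices ∀ U W : Submodule k V, U ≤ perp h W → W ≤ perp h U from ⟨this U W, this W U⟩
  intro U W hUW w hw u hu
  rw [hherm, hUW hu w hw, map_zero]

lemma IsHermitianForm.le_perp_perp (hherm : IsHermitianForm h) (U : Submodule k V) :
    U ≤ perp h (perp h U) :=
  hherm.le_perp_comm.mp le_rfl

lemma IsHermitianForm.separatingRight (hherm : IsHermitianForm h) (hnd : h.SeparatingLeft) :
    h.SeparatingRight := fun y hy =>
  hnd y fun x => by rw [hherm, hy x, map_zero]

lemma IsHermitianForm.apply_apply_eq [Nontrivial V] (hherm : IsHermitianForm h)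
    (hnd : h.SeparatingLeft) (a : k) : σ (σ a) = a := by
  obtain ⟨x, hx⟩ := exists_ne (0 : V)
  obtain ⟨y, hxy⟩ : ∃ y, h x y ≠ 0 := by
    by_contra! hzero
    exact hx (hnd x hzero)
  set z := (a / h x y) • x
  have hz : h z y = a := by simp [z, hxy]
  have := (hherm z y).trans (congrArg σ (hherm y z))
  rwa [hz, eq_comm] at this

lemma IsHermitianForm.ringHomInvPair [Nontrivial V] (hherm : IsHermitianForm h)
    (hnd : h.SeparatingLeft) : RingHomInvPair σ σ :=
  ⟨RingHom.ext (hherm.apply_apply_eq hnd), RingHom.ext (hherm.apply_apply_eq hnd)⟩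

lemma perp_eq_dualCoannihilator_map_flip [RingHomSurjective σ] (U : Submodule k V) :
    perp h U = (U.map h.flip).dualCoannihilator := by
  ext x
  simp only [Submodule.mem_dualCoannihilator, Submodule.mem_map, forall_exists_index, and_imp,
    forall_apply_eq_imp_iff₂, LinearMap.flip_apply]
  rfl

variable [FiniteDimensional k V] [RingHomInvPair σ σ]

lemma finrank_perp_add_finrank (hsep : h.SeparatingRight) (U : Submodule k V) :
    finrank k (perp h U) + finrank k U = finrank k V := by
  have hflip : Function.Injective h.flip :=
    LinearMap.ker_eq_bot.mp (LinearMap.separatingRight_iff_flip_ker_eq_bot.mp hsep)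
  rw [perp_eq_dualCoannihilator_map_flip, ← U.finrank_map_of_injective_semilinear h.flip hflip,
    add_comm]
  exact Subspace.finrank_add_finrank_dualCoannihilator_eq _

lemma IsHermitianForm.perp_perp (hherm : IsHermitianForm h) (hsep : h.SeparatingRight)
    (U : Submodule k V) : perp h (perp h U) = U := by
  refine (Submodule.eq_of_le_of_finrank_le (hherm.le_perp_perp U) ?_).symm
  have := finrank_perp_add_finrank hsep U
  have := finrank_perp_add_finrank hsep (perp h U)
  omega

lemma IsHermitianForm.perp_inf (hherm : IsHermitianForm h) (hsep : h.SeparatingRight)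
    (U W : Submodule k V) : perp h (U ⊓ W) = perp h U ⊔ perp h W := by
  conv_lhs => rw [← hherm.perp_perp hsep U, ← hherm.perp_perp hsep W, ← perp_sup]
  exact hherm.perp_perp hsep _

end Perp

theorem perp_bijOn_special_nontransverse_general (d : ℕ)
    [FiniteDimensional k V] (hdim : finrank k V = 2 * d + 1)
    (σ : k →+* k)
    (h : V →ₗ[k] V →ₛₗ[σ] k)
    (hherm : ∀ x y : V, h x y = σ (h y x))
    (hnd : ∀ x : V, (∀ y : V, h x y = 0) → x = 0)
    (W' : Submodule k V) (hW' : perp h W' ≤ W') :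
    Set.BijOn (perp h)
      {W : Submodule k V | finrank k W = 2 * d ∧ perp h W ≤ W ∧ ¬ W' ≤ W ∧
        perp h (W ⊓ W') ≤ W ⊓ W'}
      {L : Submodule k V | finrank k L = 1 ∧ (∀ x ∈ L, ∀ y ∈ L, h x y = 0) ∧
        L ≤ W' ∧ ¬ L ≤ perp h W'} := by
  have hherm : IsHermitianForm h := hherm
  have : Nontrivial V := nontrivial_of_finrank_eq_succ hdim
  have := hherm.ringHomInvPair hnd
  have hsep := hherm.separatingRight hnd
  have hpp := hherm.perp_perp hsep
  have hfinrank := finrank_perp_add_finrank hsep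
  refine Set.InvOn.bijOn ⟨fun L _ => hpp L, fun W _ => hpp W⟩ ?_ ?_
  · rintro W ⟨hWdim, hWsp, hW'W, hWW'⟩
    refine ⟨by have := hfinrank W; omega, fun x hx y hy => hx y (hWsp hy),
      ((perp_le_perp inf_le_left).trans hWW').trans inf_le_right, ?_⟩
    rwa [hherm.le_perp_comm, hpp]
  · rintro L ⟨hLdim, hLiso, hLW', hLW'perp⟩
    refine ⟨by have := hfinrank L; omega, by rwa [hpp], by rwa [hherm.le_perp_comm] at hLW'perp,
      ?_⟩
    rw [hherm.perp_inf hsep, hpp]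
    exact sup_le (le_inf hLiso hLW') (le_inf (perp_le_perp hLW') hW')

/-- Let `V` be a nondegenerate `k/κ`-hermitian space of dimension `2d+1`
and `W' ⊆ V` a special subspace of codimension `d-1`. Then `W ↦ W⊥` is a bijection from
the set of special subspaces `W` of codimension `1` with `W' ⊄ W` and `W ∩ W'` special,
onto the set of isotropic lines `L ⊆ W'` with `L ⊄ W'⊥`. -/
theorem perp_bijOn_special_nontransverse (q d : ℕ) (hd : 1 ≤ d)
    [Fintype k] (hcard : Fintype.card k = q ^ 2)
    [FiniteDimensional k V] (hdim : finrank k V = 2 * d + 1)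
    (σ : k →+* k) (hσ : ∀ x : k, σ x = x ^ q)
    (h : V →ₗ[k] V →ₛₗ[σ] k)
    (hherm : ∀ x y : V, h x y = σ (h y x))
    (hnd : ∀ x : V, (∀ y : V, h x y = 0) → x = 0)
    (W' : Submodule k V) (hW' : perp h W' ≤ W') (hW'dim : finrank k W' = d + 2) :
    Set.BijOn (perp h)
      {W : Submodule k V | finrank k W = 2 * d ∧ perp h W ≤ W ∧ ¬ W' ≤ W ∧
        perp h (W ⊓ W') ≤ W ⊓ W'}
      {L : Submodule k V | finrank k L = 1 ∧ (∀ x ∈ L, ∀ y ∈ L, h x y = 0) ∧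
        L ≤ W' ∧ ¬ L ≤ perp h W'} :=
  perp_bijOn_special_nontransverse_general d hdim σ h hherm hnd W' hW'
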